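/- For integers a, b, k with k ≥ b > a ≥ 1, m ≥ 2 and 0 ≤ h ≤ m−2: Σ_{λ ∈ BD'_{a,b,k}(m,h,a)} u^{ℓ_a(λ)} v^{ℓ_b(λ)} q^{|λ|} = (u q^a + v q^b) u^{h+1} v^{m−h−2} q^{k·C(m,2) + k·C(h+1,2) + (m−1)b + (k−b+a)(h+1)} [m−2 choose h]_k, and Σ_{λ ∈ BD'_{a,b,k}(m,h,b)} u^{ℓ_a(λ)} v^{ℓ_b(λ)} q^{|λ|} = (u q^a + v q^b) u^{h} v^{m−h−1} q^{k·C(m,2) + k·C(h+1,2) + (m−1)b + (k−b+a)h} [m−2 choose h]_k. -/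

import Mathlib

/-!
Write every part as `k c + a` or `k c + b` and call `c` its level. Since `0 < b - a < k`, the
difference conditions of `BD'` say exactly that a part `≡ a` lies two levels above the next
part and a part `≡ b` one level above it, whatever the residue of the next part. Removing the
largest part therefore expresses the generating function of the partitions whose largest part
is at level `c + 2` through those with one part fewer at levels `c` and `c + 1`. This is the
`q`-Pascal recurrence, and by induction the partitions with `n + 1` parts and largest part at
level `n + h` have generating function
`(u q^a + v q^b) u^h v^(n-h) q^(k (C(n+1,2) + C(h+1,2)) + a h + b (n-h)) [n choose h]_k`.
Removing the largest part once more gives both formulas.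
-/

/-- The finite q-Pochhammer symbol `(t;q)_n = ∏_{i=0}^{n-1} (1 - t qⁱ)`. -/
noncomputable def qPoch (t q : ℂ) (n : ℕ) : ℂ := ∏ i ∈ Finset.range n, (1 - t * q ^ i)

/-- The infinite q-Pochhammer symbol `(t;q)_∞ = ∏_{i≥0} (1 - t qⁱ)`. -/
noncomputable def qPochInf (t q : ℂ) : ℂ := ∏' i : ℕ, (1 - t * q ^ i)

/-- The Gaussian binomial coefficient `[A choose B]` in base `q`:
`(q;q)_A / ((q;q)_B (q;q)_{A-B})` for `A ≥ B ≥ 0`, and `0` otherwise. -/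
noncomputable def gbinom (q : ℂ) (A B : ℕ) : ℂ :=
  if B ≤ A then qPoch q q A / (qPoch q q B * qPoch q q (A - B)) else 0

/-- `lcount k c l` is the number of parts of `l` congruent to `c` modulo `k`. -/
def lcount (k c : ℕ) (l : List ℕ) : ℕ := (l.filter (fun x => x % k = c % k)).length

/-- Membership in `BD'_{a,b,k}(m)`: partitions `(λ_1,…,λ_m)` with exactly `m` parts, each
`≡ a` or `b (mod k)`, `λ_m ∈ {a, b}`, and for consecutive parts:
`λ_i - λ_{i+1} ≥ k` with strict inequality if `λ_i ≡ a (mod k)`, and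
`λ_i - λ_{i+1} ≤ 2k` with strict inequality if `λ_{i+1} ≡ b (mod k)`. -/
def memBD' (a b k m : ℕ) (l : List ℕ) : Prop :=
  l.Pairwise (· ≥ ·) ∧ l.length = m ∧
    (∀ x ∈ l, 0 < x ∧ (x % k = a % k ∨ x % k = b % k)) ∧
    (l.getLast? = some a ∨ l.getLast? = some b) ∧
    l.Chain' (fun x y => (y + k ≤ x ∧ (x % k = a % k → y + k < x)) ∧
      (x ≤ y + 2 * k ∧ (y % k = b % k → x < y + 2 * k)))

section GaussianBinomial

variable {x : ℂ}

lemma qPoch_zero (t q : ℂ) : qPoch t q 0 = 1 :=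
  Finset.prod_range_zero _

lemma qPoch_succ (t q : ℂ) (n : ℕ) : qPoch t q (n + 1) = qPoch t q n * (1 - t * q ^ n) :=
  Finset.prod_range_succ _ _

lemma one_sub_self_mul_pow_ne_zero (hx : ‖x‖ < 1) (n : ℕ) : 1 - x * x ^ n ≠ 0 := by
  rw [← pow_succ', sub_ne_zero]
  intro h
  have : ‖x ^ (n + 1)‖ < 1 := by
    rw [norm_pow]; exact pow_lt_one₀ (norm_nonneg x) hx n.succ_ne_zero
  rw [← h, norm_one] at this
  exact lt_irrefl _ this

lemma qPoch_self_ne_zero (hx : ‖x‖ < 1) (n : ℕ) : qPoch x x n ≠ 0 :=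
  Finset.prod_ne_zero_iff.2 fun i _ => one_sub_self_mul_pow_ne_zero hx i

lemma gbinom_zero_right (hx : ‖x‖ < 1) (n : ℕ) : gbinom x n 0 = 1 := by
  rw [gbinom, if_pos n.zero_le, Nat.sub_zero, qPoch_zero, one_mul,
    div_self (qPoch_self_ne_zero hx n)]

lemma gbinom_self (hx : ‖x‖ < 1) (n : ℕ) : gbinom x n n = 1 := by
  rw [gbinom, if_pos le_rfl, Nat.sub_self, qPoch_zero, mul_one,
    div_self (qPoch_self_ne_zero hx n)]

lemma gbinom_of_lt {n j : ℕ} (h : n < j) : gbinom x n j = 0 :=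
  if_neg (Nat.not_le.2 h)

lemma gbinom_succ_succ (hx : ‖x‖ < 1) (n j : ℕ) :
    gbinom x (n + 1) (j + 1) = gbinom x n j + x ^ (j + 1) * gbinom x n (j + 1) := by
  rcases lt_trichotomy j n with hjn | rfl | hnj
  · obtain ⟨d, rfl⟩ : ∃ d, n = j + 1 + d := ⟨n - (j + 1), by omega⟩
    have hn : j + 1 + d + 1 - (j + 1) = d + 1 := by omega
    have hj : j + 1 + d - j = d + 1 := by omega
    simp only [gbinom, if_pos (by omega : j + 1 ≤ j + 1 + d + 1),
      if_pos (by omega : j ≤ j + 1 + d), if_pos (by omega : j + 1 ≤ j + 1 + d), hn, hj,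
      Nat.add_sub_cancel_left, qPoch_succ]
    have := qPoch_self_ne_zero hx (j + 1 + d)
    have := qPoch_self_ne_zero hx j
    have := qPoch_self_ne_zero hx d
    have := one_sub_self_mul_pow_ne_zero hx j
    have := one_sub_self_mul_pow_ne_zero hx d
    field_simp
    ring
  · rw [gbinom_self hx, gbinom_self hx, gbinom_of_lt (Nat.lt_succ_self j), mul_zero, add_zero]
  · rw [gbinom_of_lt (by omega), gbinom_of_lt hnj, gbinom_of_lt (by omega)]
    ring

end GaussianBinomial

section Partitions

/-- The relation between consecutive parts in `memBD'`. -/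
def BDStep (a b k x y : ℕ) : Prop :=
  (y + k ≤ x ∧ (x % k = a % k → y + k < x)) ∧
    (x ≤ y + 2 * k ∧ (y % k = b % k → x < y + 2 * k))

def bdSet (a b k m H : ℕ) : Set (List ℕ) := {l | memBD' a b k m l ∧ l.head? = some H}

def bdWeight (a b k : ℕ) (u v q : ℂ) (l : List ℕ) : ℂ :=
  u ^ lcount k a l * v ^ lcount k b l * q ^ l.sum

noncomputable def bdGF (a b k : ℕ) (u v q : ℂ) (m H : ℕ) : ℂ :=
  ∑ᶠ l ∈ bdSet a b k m H, bdWeight a b k u v q l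

variable {a b k m : ℕ}

lemma memBD'_cons_cons {x z : ℕ} {t : List ℕ} :
    memBD' a b k (m + 1) (x :: z :: t) ↔
      memBD' a b k m (z :: t) ∧ (0 < x ∧ (x % k = a % k ∨ x % k = b % k)) ∧
        BDStep a b k x z := by
  constructor
  · rintro ⟨hs, hl, hp, hlast, hc⟩
    replace hc := List.isChain_cons_cons.1 hc
    exact ⟨⟨hs.of_cons, by simpa using hl, fun y hy => hp y (List.mem_cons_of_mem x hy),
      by rwa [List.getLast?_cons_cons] at hlast, hc.2⟩, hp x List.mem_cons_self, hc.1⟩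
  · rintro ⟨⟨hs, hl, hp, hlast, hc⟩, hx, hxz⟩
    refine ⟨List.pairwise_cons.2 ⟨fun y hy => ?_, hs⟩, by simpa using hl,
      List.forall_mem_cons.2 ⟨hx, hp⟩, by rwa [List.getLast?_cons_cons],
      List.isChain_cons_cons.2 ⟨hxz, hc⟩⟩
    have hzy : z ≥ y := by
      rcases List.mem_cons.1 hy with rfl | hy
      · exact le_rfl
      · exact List.rel_of_pairwise_cons hs hy
    have := hxz.1.1
    omega

lemma finite_setOf_length_eq_forall_le (m H : ℕ) :
    {l : List ℕ | l.length = m ∧ ∀ x ∈ l, x ≤ H}.Finite := by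
  refine ((List.finite_length_eq (Fin (H + 1)) m).image (List.map Fin.val)).subset ?_
  rintro l ⟨hl, hle⟩
  exact ⟨l.pmap (fun x hx => ⟨x, Nat.lt_succ_of_le hx⟩) hle, by simpa using hl,
    by simp [List.map_pmap]⟩

lemma bdSet_finite (m H : ℕ) : (bdSet a b k m H).Finite := by
  refine (finite_setOf_length_eq_forall_le m H).subset ?_
  rintro (_ | ⟨x, t⟩) ⟨⟨hs, hl, -⟩, hH⟩
  · simp at hH
  · obtain rfl : x = H := by simpa using hH
    exact ⟨hl, List.forall_mem_cons.2 ⟨le_rfl, fun y hy => List.rel_of_pairwise_cons hs hy⟩⟩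

lemma mod_ne_mod (ha : 1 ≤ a) (hab : a < b) (hbk : b ≤ k) : a % k ≠ b % k := by
  rw [Nat.mod_eq_of_lt (by omega : a < k)]
  rcases hbk.lt_or_eq with hbk | rfl
  · rw [Nat.mod_eq_of_lt hbk]; omega
  · rw [Nat.mod_self]; omega

lemma exists_eq_mul_add_of_mod_eq (hab : a < b) (hbk : b ≤ k) {x : ℕ}
    (hx : 0 < x ∧ (x % k = a % k ∨ x % k = b % k)) :
    ∃ c, x = k * c + a ∨ x = k * c + b := by
  have hdiv := Nat.div_add_mod x k
  rcases hx with ⟨hx, hxa | hxb⟩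
  · rw [Nat.mod_eq_of_lt (by omega : a < k)] at hxa
    exact ⟨x / k, Or.inl (by omega)⟩
  rcases hbk.lt_or_eq with hbk | rfl
  · rw [Nat.mod_eq_of_lt hbk] at hxb
    exact ⟨x / k, Or.inr (by omega)⟩
  · rw [Nat.mod_self] at hxb
    have hpos : 0 < x / b := Nat.div_pos (Nat.le_of_dvd hx (Nat.dvd_of_mod_eq_zero hxb)) (by omega)
    refine ⟨x / b - 1, Or.inr ?_⟩
    rw [← mul_add_one, Nat.sub_add_cancel (Nat.one_le_iff_ne_zero.2 hpos.ne')]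
    omega

lemma eq_of_mul_lt_mul_add {c d : ℕ} (h₁ : k * c < k * d + k) (h₂ : k * d < k * c + k) :
    c = d := by
  rw [← mul_add_one] at h₁ h₂
  have := Nat.lt_of_mul_lt_mul_left h₁
  have := Nat.lt_of_mul_lt_mul_left h₂
  omega

lemma bdStep_a_iff (ha : 1 ≤ a) (hab : a < b) (hbk : b ≤ k) {c j r : ℕ}
    (hr : r = a ∨ r = b) :
    BDStep a b k (k * c + a) (k * j + r) ↔ c = j + 2 := by
  have hne := mod_ne_mod ha hab hbk
  have hk2 : k * (j + 2) = k * j + 2 * k := by ring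
  unfold BDStep
  rw [Nat.mul_add_mod, Nat.mul_add_mod]
  constructor
  · rintro ⟨⟨-, h₁⟩, h₂, -⟩
    have := h₁ rfl
    rcases hr with rfl | rfl <;> apply eq_of_mul_lt_mul_add (k := k) <;> omega
  · rintro rfl
    rcases hr with rfl | rfl
    · exact ⟨⟨by omega, fun _ => by omega⟩, by omega, fun h => absurd h hne⟩
    · exact ⟨⟨by omega, fun _ => by omega⟩, by omega, fun _ => by omega⟩

lemma bdStep_b_iff (ha : 1 ≤ a) (hab : a < b) (hbk : b ≤ k) {c j r : ℕ}
    (hr : r = a ∨ r = b) :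
    BDStep a b k (k * c + b) (k * j + r) ↔ c = j + 1 := by
  have hne := mod_ne_mod ha hab hbk
  have hk1 : k * (j + 1) = k * j + k := by ring
  unfold BDStep
  rw [Nat.mul_add_mod, Nat.mul_add_mod]
  constructor
  · rintro ⟨⟨h₁, -⟩, h₂, h₃⟩
    rcases hr with rfl | rfl
    · apply eq_of_mul_lt_mul_add (k := k) <;> omega
    · have := h₃ rfl
      apply eq_of_mul_lt_mul_add (k := k) <;> omega
  · rintro rfl
    rcases hr with rfl | rfl
    · exact ⟨⟨by omega, fun h => absurd h.symm hne⟩, by omega, fun h => absurd h hne⟩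
    · exact ⟨⟨by omega, fun h => absurd h.symm hne⟩, by omega, fun _ => by omega⟩

end Partitions

section GeneratingFunctions

variable {a b k m : ℕ} {u v q : ℂ}

noncomputable def levelGF (a b k : ℕ) (u v q : ℂ) (m c : ℕ) : ℂ :=
  bdGF a b k u v q m (k * c + a) + bdGF a b k u v q m (k * c + b)

lemma lcount_cons (c x : ℕ) (t : List ℕ) :
    lcount k c (x :: t) = lcount k c [x] + lcount k c t := by
  by_cases h : x % k = c % k <;> simp [lcount, h, add_comm]

lemma bdWeight_cons (x : ℕ) (t : List ℕ) :
    bdWeight a b k u v q (x :: t) = bdWeight a b k u v q [x] * bdWeight a b k u v q t := by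
  simp only [bdWeight, lcount_cons _ x t, List.sum_cons, List.sum_nil, add_zero, pow_add]
  ring

lemma bdWeight_singleton_of_mod_a (hne : a % k ≠ b % k) {x : ℕ} (hx : x % k = a % k) :
    bdWeight a b k u v q [x] = u * q ^ x := by
  simp [bdWeight, lcount, hx, hne]

lemma bdWeight_singleton_of_mod_b (hne : a % k ≠ b % k) {x : ℕ} (hx : x % k = b % k) :
    bdWeight a b k u v q [x] = v * q ^ x := by
  simp [bdWeight, lcount, hx, hne.symm]

lemma bdSet_one (ha : 1 ≤ a) (hab : a < b) (H : ℕ) :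
    bdSet a b k 1 H = if H = a ∨ H = b then {[H]} else ∅ := by
  ext l
  constructor
  · rintro ⟨⟨-, hl, -, hlast, -⟩, hH⟩
    obtain ⟨x, rfl⟩ := List.length_eq_one_iff.1 hl
    obtain rfl : x = H := by simpa using hH
    simp_all
  · split_ifs with hH
    · rintro rfl
      refine ⟨⟨List.pairwise_singleton _ _, rfl, ?_, by simpa using hH,
        List.isChain_singleton _⟩, rfl⟩
      simp only [List.mem_singleton, forall_eq]
      rcases hH with rfl | rfl
      · exact ⟨by omega, Or.inl rfl⟩
      · exact ⟨by omega, Or.inr rfl⟩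
    · exact False.elim

lemma bdSet_succ (hm : m ≠ 0) {x : ℕ} (hx : 0 < x ∧ (x % k = a % k ∨ x % k = b % k)) :
    bdSet a b k (m + 1) x =
      (x :: ·) '' {t | memBD' a b k m t ∧ ∃ z ∈ t.head?, BDStep a b k x z} := by
  ext l
  constructor
  · rintro ⟨hl, hH⟩
    rcases l with _ | ⟨y, _ | ⟨z, t⟩⟩
    · simp at hH
    · exact absurd hl.2.1 (by simp [hm])
    obtain rfl : y = x := by simpa using hH
    obtain ⟨ht, -, hxz⟩ := memBD'_cons_cons.1 hl
    exact ⟨z :: t, ⟨ht, z, rfl, hxz⟩, rfl⟩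
  · rintro ⟨_ | ⟨z, t⟩, ⟨ht, z', hz, hxz⟩, rfl⟩
    · simp at hz
    · obtain rfl : z' = z := by simpa using hz.symm
      exact ⟨memBD'_cons_cons.2 ⟨ht, hx, hxz⟩, rfl⟩

lemma bdSet_disjoint {H H' : ℕ} (h : H ≠ H') : Disjoint (bdSet a b k m H) (bdSet a b k m H') :=
  Set.disjoint_left.2 fun _ hH hH' => h (Option.some_injective _ (hH.2.symm.trans hH'.2))

lemma setOf_head_bdStep_eq (hab : a < b) (hbk : b ≤ k) {x c : ℕ}
    (hstep : ∀ j r, (r = a ∨ r = b) → (BDStep a b k x (k * j + r) ↔ j = c)) :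
    {t | memBD' a b k m t ∧ ∃ z ∈ t.head?, BDStep a b k x z} =
      bdSet a b k m (k * c + a) ∪ bdSet a b k m (k * c + b) := by
  ext t
  constructor
  · rintro ⟨ht, z, hz, hxz⟩
    obtain ⟨j, rfl | rfl⟩ :=
      exists_eq_mul_add_of_mod_eq hab hbk (ht.2.2.1 z (List.mem_of_mem_head? hz))
    · obtain rfl := (hstep j a (Or.inl rfl)).1 hxz
      exact Or.inl ⟨ht, hz⟩
    · obtain rfl := (hstep j b (Or.inr rfl)).1 hxz
      exact Or.inr ⟨ht, hz⟩
  · rintro (⟨ht, hH⟩ | ⟨ht, hH⟩)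
    · exact ⟨ht, _, hH, (hstep c a (Or.inl rfl)).2 rfl⟩
    · exact ⟨ht, _, hH, (hstep c b (Or.inr rfl)).2 rfl⟩

lemma bdGF_succ_eq_mul_levelGF (hab : a < b) (hbk : b ≤ k) (hm : m ≠ 0) {x c : ℕ}
    (hx : 0 < x ∧ (x % k = a % k ∨ x % k = b % k))
    (hstep : ∀ j r, (r = a ∨ r = b) → (BDStep a b k x (k * j + r) ↔ j = c)) :
    bdGF a b k u v q (m + 1) x = bdWeight a b k u v q [x] * levelGF a b k u v q m c := by
  rw [bdGF, bdSet_succ hm hx, finsum_mem_image List.cons_injective.injOn,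
    setOf_head_bdStep_eq hab hbk hstep, finsum_mem_congr rfl fun t _ => bdWeight_cons x t,
    ← mul_finsum_mem, finsum_mem_union (bdSet_disjoint (by omega)) (bdSet_finite _ _)
      (bdSet_finite _ _)]
  rfl

lemma bdGF_succ_eq_zero (hab : a < b) (hbk : b ≤ k) (hm : m ≠ 0) {x : ℕ}
    (hx : 0 < x ∧ (x % k = a % k ∨ x % k = b % k))
    (hstep : ∀ j r, (r = a ∨ r = b) → ¬ BDStep a b k x (k * j + r)) :
    bdGF a b k u v q (m + 1) x = 0 := by
  have hempty : {t | memBD' a b k m t ∧ ∃ z ∈ t.head?, BDStep a b k x z} = ∅ := by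
    refine Set.eq_empty_iff_forall_notMem.2 fun t ⟨ht, z, hz, hxz⟩ => ?_
    obtain ⟨j, rfl | rfl⟩ :=
      exists_eq_mul_add_of_mod_eq hab hbk (ht.2.2.1 z (List.mem_of_mem_head? hz))
    · exact hstep j a (Or.inl rfl) hxz
    · exact hstep j b (Or.inr rfl) hxz
  rw [bdGF, bdSet_succ hm hx, hempty, Set.image_empty, finsum_mem_empty]

lemma bdGF_succ_a (ha : 1 ≤ a) (hab : a < b) (hbk : b ≤ k) (hm : m ≠ 0) (c : ℕ) :
    bdGF a b k u v q (m + 1) (k * (c + 2) + a) =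
      u * q ^ (k * (c + 2) + a) * levelGF a b k u v q m c := by
  rw [bdGF_succ_eq_mul_levelGF hab hbk hm ⟨by omega, Or.inl (Nat.mul_add_mod _ _ _)⟩
      fun j r hr => (bdStep_a_iff ha hab hbk hr).trans ((add_left_inj 2).trans eq_comm),
    bdWeight_singleton_of_mod_a (mod_ne_mod ha hab hbk) (Nat.mul_add_mod _ _ _)]

lemma bdGF_succ_b (ha : 1 ≤ a) (hab : a < b) (hbk : b ≤ k) (hm : m ≠ 0) (c : ℕ) :
    bdGF a b k u v q (m + 1) (k * (c + 1) + b) =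
      v * q ^ (k * (c + 1) + b) * levelGF a b k u v q m c := by
  rw [bdGF_succ_eq_mul_levelGF hab hbk hm ⟨by omega, Or.inr (Nat.mul_add_mod _ _ _)⟩
      fun j r hr => (bdStep_b_iff ha hab hbk hr).trans ((add_left_inj 1).trans eq_comm),
    bdWeight_singleton_of_mod_b (mod_ne_mod ha hab hbk) (Nat.mul_add_mod _ _ _)]

lemma bdGF_succ_a_of_lt (ha : 1 ≤ a) (hab : a < b) (hbk : b ≤ k) (hm : m ≠ 0) {c : ℕ}
    (hc : c < 2) :
    bdGF a b k u v q (m + 1) (k * c + a) = 0 :=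
  bdGF_succ_eq_zero hab hbk hm ⟨by omega, Or.inl (Nat.mul_add_mod _ _ _)⟩ fun _ _ hr h => by
    have := (bdStep_a_iff ha hab hbk hr).1 h
    omega

lemma bdGF_succ_b_zero (ha : 1 ≤ a) (hab : a < b) (hbk : b ≤ k) (hm : m ≠ 0) :
    bdGF a b k u v q (m + 1) (k * 0 + b) = 0 :=
  bdGF_succ_eq_zero hab hbk hm ⟨by omega, Or.inr (Nat.mul_add_mod _ _ _)⟩ fun _ _ hr h => by
    have := (bdStep_b_iff ha hab hbk hr).1 h
    omega

lemma levelGF_one_zero (ha : 1 ≤ a) (hab : a < b) (hbk : b ≤ k) :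
    levelGF a b k u v q 1 0 = u * q ^ a + v * q ^ b := by
  have hne := mod_ne_mod ha hab hbk
  rw [levelGF, bdGF, bdGF, mul_zero, zero_add, zero_add, bdSet_one ha hab, bdSet_one ha hab,
    if_pos (Or.inl rfl), if_pos (Or.inr rfl), finsum_mem_singleton, finsum_mem_singleton,
    bdWeight_singleton_of_mod_a hne rfl, bdWeight_singleton_of_mod_b hne rfl]

lemma levelGF_one_succ (ha : 1 ≤ a) (hab : a < b) (hbk : b ≤ k) (c : ℕ) :
    levelGF a b k u v q 1 (c + 1) = 0 := by
  have : k ≤ k * (c + 1) := Nat.le_mul_of_pos_right k c.succ_pos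
  rw [levelGF, bdGF, bdGF, bdSet_one ha hab, bdSet_one ha hab, if_neg (by omega),
    if_neg (by omega), finsum_mem_empty, add_zero]

lemma levelGF_succ_zero (ha : 1 ≤ a) (hab : a < b) (hbk : b ≤ k) (hm : m ≠ 0) :
    levelGF a b k u v q (m + 1) 0 = 0 := by
  rw [levelGF, bdGF_succ_a_of_lt ha hab hbk hm (by norm_num), bdGF_succ_b_zero ha hab hbk hm,
    add_zero]

lemma levelGF_succ_one (ha : 1 ≤ a) (hab : a < b) (hbk : b ≤ k) (hm : m ≠ 0) :
    levelGF a b k u v q (m + 1) 1 = v * q ^ (k + b) * levelGF a b k u v q m 0 := by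
  rw [levelGF, bdGF_succ_a_of_lt ha hab hbk hm (by norm_num), zero_add,
    show k * 1 + b = k * (0 + 1) + b by rw [zero_add], bdGF_succ_b ha hab hbk hm, zero_add,
    mul_one]

lemma levelGF_succ_add_two (ha : 1 ≤ a) (hab : a < b) (hbk : b ≤ k) (hm : m ≠ 0) (c : ℕ) :
    levelGF a b k u v q (m + 1) (c + 2) =
      u * q ^ (k * (c + 2) + a) * levelGF a b k u v q m c +
        v * q ^ (k * (c + 2) + b) * levelGF a b k u v q m (c + 1) := by
  rw [levelGF, bdGF_succ_a ha hab hbk hm, bdGF_succ_b ha hab hbk hm (c + 1)]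

lemma levelGF_eq_zero_of_lt (ha : 1 ≤ a) (hab : a < b) (hbk : b ≤ k) :
    ∀ {n c : ℕ}, c < n → levelGF a b k u v q (n + 1) c = 0
  | n + 1, 0, _ => levelGF_succ_zero ha hab hbk n.succ_ne_zero
  | n + 1, 1, hc => by
    rw [levelGF_succ_one ha hab hbk n.succ_ne_zero,
      levelGF_eq_zero_of_lt ha hab hbk (by omega : 0 < n), mul_zero]
  | n + 1, c + 2, hc => by
    rw [levelGF_succ_add_two ha hab hbk n.succ_ne_zero, levelGF_eq_zero_of_lt ha hab hbk
      (by omega : c < n), levelGF_eq_zero_of_lt ha hab hbk (by omega : c + 1 < n)]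
    ring

lemma levelGF_succ_self (ha : 1 ≤ a) (hab : a < b) (hbk : b ≤ k) (n : ℕ) :
    levelGF a b k u v q (n + 2) (n + 1) =
      v * q ^ (k * (n + 1) + b) * levelGF a b k u v q (n + 1) n := by
  cases n with
  | zero => rw [levelGF_succ_one ha hab hbk one_ne_zero, zero_add, mul_one]
  | succ n =>
    rw [levelGF_succ_add_two ha hab hbk (n + 1).succ_ne_zero,
      levelGF_eq_zero_of_lt ha hab hbk n.lt_succ_self]
    ring

theorem levelGF_eq (ha : 1 ≤ a) (hab : a < b) (hbk : b ≤ k) (hq : ‖q‖ < 1) (n h : ℕ) :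
    levelGF a b k u v q (n + 1) (n + h) =
      (u * q ^ a + v * q ^ b) * u ^ h * v ^ (n - h) *
        q ^ (k * (Nat.choose (n + 1) 2 + Nat.choose (h + 1) 2) + a * h + b * (n - h)) *
        gbinom (q ^ k) n h := by
  have hqk : ‖q ^ k‖ < 1 := by
    rw [norm_pow]; exact pow_lt_one₀ (norm_nonneg q) hq (by omega)
  induction n generalizing h with
  | zero =>
    cases h with
    | zero => simp [levelGF_one_zero ha hab hbk, gbinom_zero_right hqk]
    | succ h =>
      rw [Nat.zero_add (h + 1), levelGF_one_succ ha hab hbk, gbinom_of_lt h.succ_pos, mul_zero]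
  | succ n ih =>
    cases h with
    | zero =>
      have ih0 := ih 0
      rw [add_zero] at ih0
      rw [add_zero, levelGF_succ_self ha hab hbk, ih0, gbinom_zero_right hqk,
        gbinom_zero_right hqk]
      simp only [Nat.choose_succ_succ' _ 1, Nat.choose_one_right, Nat.sub_zero]
      ring
    | succ j =>
      rw [show n + 1 + (j + 1) = n + j + 2 by omega,
        levelGF_succ_add_two ha hab hbk n.succ_ne_zero, show n + j + 1 = n + (j + 1) by omega,
        ih j, ih (j + 1), gbinom_succ_succ hqk, Nat.add_sub_add_right]
      rcases lt_or_ge j n with hjn | hnj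
      · obtain ⟨d, rfl⟩ : ∃ d, n = j + 1 + d := ⟨n - (j + 1), by omega⟩
        rw [show j + 1 + d - j = d + 1 by omega, Nat.add_sub_cancel_left]
        simp only [Nat.choose_succ_succ' _ 1, Nat.choose_one_right]
        ring
      · rw [gbinom_of_lt (Nat.lt_succ_of_le hnj)]
        simp only [Nat.choose_succ_succ' _ 1, Nat.choose_one_right]
        ring

end GeneratingFunctions

/-- Generating functions for the partitions in `BD'_{a,b,k}(m,h,a)` (largest part
`k(h+1)+k(m-1)+a`) and `BD'_{a,b,k}(m,h,b)` (largest part `kh+k(m-1)+b`). -/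
theorem gen_BD'_mha (a b k m h : ℕ) (ha : 1 ≤ a) (hab : a < b) (hbk : b ≤ k)
    (hm : 2 ≤ m) (hh : h ≤ m - 2) (q u v : ℂ) (hq : ‖q‖ < 1) :
    (∑ᶠ l ∈ {l : List ℕ |
          memBD' a b k m l ∧ l.head? = some (k * (h + 1) + k * (m - 1) + a)},
        u ^ lcount k a l * v ^ lcount k b l * q ^ l.sum
      = (u * q ^ a + v * q ^ b) * u ^ (h + 1) * v ^ (m - h - 2) *
          q ^ (k * Nat.choose m 2 + k * Nat.choose (h + 1) 2 + (m - 1) * b +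
            (k - b + a) * (h + 1)) *
          gbinom (q ^ k) (m - 2) h)
    ∧ (∑ᶠ l ∈ {l : List ℕ | memBD' a b k m l ∧ l.head? = some (k * h + k * (m - 1) + b)},
        u ^ lcount k a l * v ^ lcount k b l * q ^ l.sum
      = (u * q ^ a + v * q ^ b) * u ^ h * v ^ (m - h - 1) *
          q ^ (k * Nat.choose m 2 + k * Nat.choose (h + 1) 2 + (m - 1) * b +
            (k - b + a) * h) *
          gbinom (q ^ k) (m - 2) h) := by
  obtain ⟨d, rfl⟩ : ∃ d, m = h + d + 2 := ⟨m - 2 - h, by omega⟩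
  change bdGF a b k u v q (h + d + 1 + 1) _ = _ ∧ bdGF a b k u v q (h + d + 1 + 1) _ = _
  simp only [show h + d + 2 - 1 = h + d + 1 by omega, show h + d + 2 - 2 = h + d by omega,
    show h + d + 2 - h - 2 = d by omega, show h + d + 2 - h - 1 = d + 1 by omega]
  rw [show k * (h + 1) + k * (h + d + 1) + a = k * (h + d + h + 2) + a by ring,
    show k * h + k * (h + d + 1) + b = k * (h + d + h + 1) + b by ring,
    bdGF_succ_a ha hab hbk (by omega), bdGF_succ_b ha hab hbk (by omega),
    levelGF_eq ha hab hbk hq, Nat.add_sub_cancel_left]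
  obtain ⟨e, rfl⟩ := Nat.exists_eq_add_of_le hbk
  rw [Nat.add_sub_cancel_left]
  constructor <;> simp only [Nat.choose_succ_succ' _ 1, Nat.choose_one_right] <;> ring
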